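/- For every k ∈ ℕ, the prefix-counting definitions and the recursive definitions of the witness languages agree: W_k = W′_k, W_k⁺ = W′_k⁺ and W_k⁻ = W′_k⁻. -/

import Mathlib

/-!
Read a word as a walk whose height is `μ`. A word avoids the factors `a W_k⁺ a` and `b W_k⁻ b`
exactly when none of its factors rises or falls by `k + 2` or more: a factor rising by `k + 2`
contains one of the form `a W_k⁺ a`, cut out at the first arrival at the top and the last
departure from the starting level before it. Hence a walk that has reached `k + 1` without going
negative avoids these factors iff it stays in `[0, k + 1]`. Conversely a walk in `W_{k+1}` splits
at its first arrival at `k + 1` and its last departure from there, which gives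
`W_k⁺ a Σ* b W_k⁻`; a walk in `W_{k+1}⁺` splits at its last departure from `0`, and the part
before that either reaches `k + 1` (split it at the first arrival) or lies in `W_i` for its
maximal height `i ≤ k`.
-/

namespace ADTpaper

/-- The two-letter alphabet is `Bool`, with `a := true` and `b := false`;
`la` is the one-word language `{a}`. -/
def la : Language Bool := {[true]}

/-- The one-word language `{b}`. -/
def lb : Language Bool := {[false]}

/-- `μ(w)`: the number of occurrences of `a` minus the number of occurrences of `b`. -/
def mu (w : List Bool) : ℤ := (w.count true : ℤ) - (w.count false : ℤ)

/-- The prefix-counting definition of the witness language `W_k`. -/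
def W (k : ℕ) : Language Bool :=
  {w | mu w = 0 ∧ (∀ w', w' <+: w → 0 ≤ mu w' ∧ mu w' ≤ (k : ℤ)) ∧
    ∃ w'', w'' <+: w ∧ mu w'' = (k : ℤ)}

/-- The prefix-counting definition of `W_k⁺`. -/
def Wp (k : ℕ) : Language Bool :=
  {w | mu w = (k : ℤ) ∧ ∀ w', w' <+: w → 0 ≤ mu w' ∧ mu w' ≤ (k : ℤ)}

/-- The prefix-counting definition of `W_k⁻`. -/
def Wm (k : ℕ) : Language Bool :=
  {w | mu w = -(k : ℤ) ∧ ∀ w', w' <+: w → -(k : ℤ) ≤ mu w' ∧ mu w' ≤ 0}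

/-- The letter swap `a ↔ b` applied to every word of a language. -/
def swapL (L : Language Bool) : Language Bool := (fun w => w.map not) '' (L : Set (List Bool))

mutual
  /-- The recursive definition `W′_k` of the witness languages. -/
  noncomputable def W' : ℕ → Language Bool
    | 0 => 1
    | k + 1 =>
        (W'p k * la * ⊤ * lb * W'm k) \
          (⊤ * la * W'p k * la * ⊤ ⊔ ⊤ * lb * W'm k * lb * ⊤)
    termination_by k => (k, 0)
  /-- The recursive definition `W′_k⁺`. -/
  noncomputable def W'p : ℕ → Language Bool
    | 0 => 1
    | k + 1 =>
        ((W'p k * la * ⊤ * la * W'p k) ⊔ ⨆ i : Fin (k + 1), W' i.1 * la * W'p k) \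
          (⊤ * la * W'p k * la * ⊤ ⊔ ⊤ * lb * W'm k * lb * ⊤)
    termination_by k => (k, 0)
  /-- The recursive definition `W′_k⁻`: the letter swap of `W′_k⁺`. -/
  noncomputable def W'm : ℕ → Language Bool
    | 0 => 1
    | k + 1 => swapL (W'p (k + 1))
    termination_by k => (k, 1)
end

@[simp] lemma mu_nil : mu [] = 0 := by simp [mu]

@[simp] lemma mu_append (u v : List Bool) : mu (u ++ v) = mu u + mu v := by
  simp only [mu, List.count_append]; push_cast; ring

@[simp] lemma mu_cons_true (w : List Bool) : mu (true :: w) = 1 + mu w := by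
  simp [mu]; ring

@[simp] lemma mu_cons_false (w : List Bool) : mu (false :: w) = mu w - 1 := by
  simp [mu]; ring

@[simp] lemma mu_map_not (w : List Bool) : mu (w.map not) = -mu w := by
  induction w with
  | nil => simp
  | cons x w ih => cases x <;> simp [ih] <;> ring

lemma prefix_append_cases {α : Type*} {r u v : List α} (h : r <+: u ++ v) :
    r <+: u ∨ ∃ t, t <+: v ∧ r = u ++ t := by
  rcases List.prefix_or_prefix_of_prefix h (List.prefix_append u v) with h' | ⟨t, rfl⟩
  · exact Or.inl h'
  · exact Or.inr ⟨t, (List.prefix_append_right_inj u).1 h, rfl⟩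

lemma exists_first_hit {w : List Bool} {c : ℤ} (hc : 0 < c)
    (h : ∃ p, p <+: w ∧ c ≤ mu p) :
    ∃ u v, w = u ++ true :: v ∧ mu u + 1 = c ∧ ∀ r, r <+: u → mu r < c := by
  induction w using List.reverseRecOn with
  | nil =>
    obtain ⟨p, hp, hcp⟩ := h
    rw [List.prefix_nil.1 hp, mu_nil] at hcp
    omega
  | append_singleton w x ih =>
    by_cases hw : ∃ p, p <+: w ∧ c ≤ mu p
    · obtain ⟨u, v, rfl, hu, hr⟩ := ih hw
      exact ⟨u, v ++ [x], by simp, hu, hr⟩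
    · push Not at hw
      obtain ⟨p, hp, hcp⟩ := h
      rcases List.prefix_concat_iff.1 hp with rfl | hp
      · have hlt := hw w (List.prefix_refl w)
        cases x <;> simp at hcp
        · omega
        · exact ⟨w, [], by simp, by omega, hw⟩
      · exact absurd hcp (not_le.2 (hw p hp))

lemma exists_last_ascent {w : List Bool} {c : ℤ} (hc : 0 ≤ c) (h : c < mu w) :
    ∃ u v, w = u ++ true :: v ∧ mu u = c ∧ ∀ t, t <+: v → 0 ≤ mu t := by
  induction w using List.reverseRecOn with
  | nil => simp at h; omega
  | append_singleton w x ih =>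
    by_cases hlast : x = true ∧ mu w = c
    · obtain ⟨rfl, hw⟩ := hlast
      refine ⟨w, [], by simp, hw, fun t ht => ?_⟩
      simp [List.prefix_nil.1 ht]
    · have hw : c < mu w := by cases x <;> simp at h hlast <;> omega
      obtain ⟨u, v, rfl, hu, hv⟩ := ih hw
      refine ⟨u, v ++ [x], by simp, hu, fun t ht => ?_⟩
      rcases List.prefix_concat_iff.1 ht with rfl | ht
      · cases x <;> simp at h ⊢ <;> omega
      · exact hv t ht

lemma exists_last_descent {w : List Bool} {c : ℤ} (hc : c ≤ 0) (h : mu w < c) :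
    ∃ u v, w = u ++ false :: v ∧ mu u = c ∧ ∀ t, t <+: v → mu t ≤ 0 := by
  obtain ⟨u, v, hw, hu, hv⟩ :=
    exists_last_ascent (w := w.map not) (c := -c) (by omega) (by simp; omega)
  refine ⟨u.map not, v.map not, ?_, by simp [hu], fun t ht => ?_⟩
  · simpa [Bool.involutive_not.comp_self] using congrArg (List.map not) hw
  · have := hv (t.map not) (by simpa [Bool.involutive_not.comp_self] using ht.map not)
    simp at this
    omega

lemma mem_Wm_iff_map_not_mem_Wp {k : ℕ} {v : List Bool} :
    v ∈ Wm k ↔ v.map not ∈ Wp k := by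
  constructor
  · rintro ⟨hv, hb⟩
    refine ⟨by simp [hv], fun t ht => ?_⟩
    obtain ⟨s, hs, rfl⟩ := List.prefix_map_iff.1 ht
    have := hb s hs
    simp only [mu_map_not]
    omega
  · rintro ⟨hv, hb⟩
    refine ⟨by simp at hv; omega, fun t ht => ?_⟩
    have := hb _ (ht.map not)
    simp only [mu_map_not] at this
    omega

lemma mem_swapL {L : Language Bool} {w : List Bool} : w ∈ swapL L ↔ w.map not ∈ L :=
  have hnot := Bool.involutive_not.list_map
  Set.mem_image_iff_of_inverse hnot.leftInverse hnot.rightInverse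

lemma Wm_eq_swapL (k : ℕ) : Wm k = swapL (Wp k) := by
  ext v
  rw [mem_swapL, mem_Wm_iff_map_not_mem_Wp]

section Factors

variable {α : Type*}

lemma mem_mul_singleton_mul {A C : Language α} {x : α} {w : List α} :
    w ∈ A * {[x]} * C ↔ ∃ a ∈ A, ∃ c ∈ C, w = a ++ x :: c := by
  simp only [Language.mem_mul]
  constructor
  · rintro ⟨_, ⟨a, ha, _, rfl, rfl⟩, c, hc, rfl⟩
    exact ⟨a, ha, c, hc, by simp⟩
  · rintro ⟨a, ha, c, hc, rfl⟩
    exact ⟨a ++ [x], ⟨a, ha, [x], rfl, rfl⟩, c, hc, by simp⟩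

lemma mem_mul_singleton_mul_singleton_mul {A C E : Language α} {x y : α} {w : List α} :
    w ∈ A * {[x]} * C * {[y]} * E ↔
      ∃ a ∈ A, ∃ c ∈ C, ∃ e ∈ E, w = a ++ x :: (c ++ y :: e) := by
  simp only [mem_mul_singleton_mul]
  constructor
  · rintro ⟨_, ⟨a, ha, c, hc, rfl⟩, e, he, rfl⟩
    exact ⟨a, ha, c, hc, e, he, by simp⟩
  · rintro ⟨a, ha, c, hc, e, he, rfl⟩
    exact ⟨a ++ x :: c, ⟨a, ha, c, hc, rfl⟩, e, he, by simp⟩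

end Factors

lemma exists_Wp_factor {k : ℕ} {z : List Bool} (h : (k : ℤ) + 2 ≤ mu z) :
    ∃ p c q, c ∈ Wp k ∧ z = p ++ true :: (c ++ true :: q) := by
  obtain ⟨y, q, rfl, hy, hyb⟩ :=
    exists_first_hit (w := z) (c := k + 2) (by omega) ⟨z, List.prefix_refl z, h⟩
  obtain ⟨p, c, rfl, hp, hc⟩ := exists_last_ascent (w := y) (c := 0) le_rfl (by omega)
  refine ⟨p, c, q, ⟨?_, fun t ht => ⟨hc t ht, ?_⟩⟩, by simp⟩
  · simp at hy
    omega
  · have := hyb (p ++ true :: t) (by simpa using ht)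
    simp at this
    omega

def forbidden (k : ℕ) : Language Bool := ⊤ * la * Wp k * la * ⊤ ⊔ ⊤ * lb * Wm k * lb * ⊤

section Forbidden

variable {k : ℕ} {w : List Bool}

lemma mem_forbidden_of_le_mu {z : List Bool} (hz : z <:+: w) (h : (k : ℤ) + 2 ≤ mu z) :
    w ∈ forbidden k := by
  obtain ⟨s, t, rfl⟩ := hz
  obtain ⟨p, c, q, hc, rfl⟩ := exists_Wp_factor h
  left
  exact mem_mul_singleton_mul_singleton_mul.2 ⟨s ++ p, trivial, c, hc, q ++ t, trivial, by simp⟩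

lemma mem_forbidden_of_mu_le {z : List Bool} (hz : z <:+: w) (h : mu z ≤ -((k : ℤ) + 2)) :
    w ∈ forbidden k := by
  obtain ⟨s, t, rfl⟩ := hz
  obtain ⟨p, c, q, hc, hz⟩ := exists_Wp_factor (k := k) (z := z.map not) (by simp; omega)
  replace hz : z = p.map not ++ false :: (c.map not ++ false :: q.map not) := by
    simpa [Bool.involutive_not.comp_self] using congrArg (List.map not) hz
  right
  refine mem_mul_singleton_mul_singleton_mul.2
    ⟨s ++ p.map not, trivial, c.map not, ?_, q.map not ++ t, trivial, by simp [hz]⟩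
  rwa [mem_Wm_iff_map_not_mem_Wp, Bool.involutive_not.list_map c]

lemma not_mem_forbidden_of_prefix_bounds
    (h : ∀ r, r <+: w → 0 ≤ mu r ∧ mu r ≤ (k : ℤ) + 1) : w ∉ forbidden k := by
  rintro (hw | hw) <;>
    obtain ⟨p, -, c, ⟨hc, -⟩, q, -, rfl⟩ := mem_mul_singleton_mul_singleton_mul.1 hw
  · have h₁ := h p (by simp)
    have h₂ := h (p ++ true :: (c ++ [true])) (by simp)
    simp at h₂
    omega
  · have h₁ := h p (by simp)
    have h₂ := h (p ++ false :: (c ++ [false])) (by simp)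
    simp at h₂
    omega

lemma prefix_bounds_of_not_mem_forbidden (hw : w ∉ forbidden k) {p : List Bool} (hp : p <+: w)
    (hpk : mu p = (k : ℤ) + 1) (hpb : ∀ r, r <+: p → 0 ≤ mu r) :
    ∀ r, r <+: w → 0 ≤ mu r ∧ mu r ≤ (k : ℤ) + 1 := by
  intro r hr
  have upper : mu r ≤ (k : ℤ) + 1 :=
    not_lt.1 fun hlt => hw (mem_forbidden_of_le_mu hr.isInfix (by omega))
  refine ⟨?_, upper⟩
  rcases List.prefix_or_prefix_of_prefix hr hp with hrp | ⟨z, rfl⟩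
  · exact hpb r hrp
  · refine not_lt.1 fun hlt => hw (mem_forbidden_of_mu_le (z := z) ?_ ?_)
    · exact (List.suffix_append p z).isInfix.trans hr.isInfix
    · simp at hlt
      omega

lemma prefix_bounds_of_mem_Wp_of_not_mem_forbidden {u z : List Bool} (hu : u ∈ Wp k)
    (hw : u ++ true :: z ∉ forbidden k) :
    ∀ r, r <+: u ++ true :: z → 0 ≤ mu r ∧ mu r ≤ (k : ℤ) + 1 := by
  refine prefix_bounds_of_not_mem_forbidden hw (p := u ++ [true]) (by simp) (by simp [hu.1])
    fun r hr => ?_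
  rcases List.prefix_concat_iff.1 hr with rfl | hr
  · simp [hu.1]
    omega
  · exact (hu.2 r hr).1

end Forbidden

section Decomposition

variable {k : ℕ}

lemma exists_mem_W_of_prefix_bounds {p : List Bool} (hp : mu p = 0)
    (hb : ∀ r, r <+: p → 0 ≤ mu r ∧ mu r ≤ k) : ∃ i ≤ k, p ∈ W i := by
  classical
  have hex : ∃ i : ℕ, ∀ r, r <+: p → mu r ≤ i := ⟨k, fun r hr => (hb r hr).2⟩
  refine ⟨Nat.find hex, Nat.find_min' hex fun r hr => (hb r hr).2,
    hp, fun r hr => ⟨(hb r hr).1, Nat.find_spec hex r hr⟩, ?_⟩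
  by_contra! hne
  rcases Nat.eq_zero_or_eq_succ_pred (Nat.find hex) with h0 | hsucc
  · exact hne [] List.nil_prefix (by simp [h0])
  · refine Nat.find_min hex (Nat.pred_lt_self (by omega)) fun r hr => ?_
    have := Nat.find_spec hex r hr
    have := hne r hr
    omega

lemma exists_decomp_of_mem_W_succ {w : List Bool} (h : w ∈ W (k + 1)) :
    ∃ u m v, u ∈ Wp k ∧ v ∈ Wm k ∧ w = u ++ true :: (m ++ false :: v) := by
  obtain ⟨h0, hb, p, hp, hpk⟩ := h
  push_cast at hb hpk
  obtain ⟨u, r, rfl, hu, hur⟩ := exists_first_hit (c := k + 1) (by omega) ⟨p, hp, hpk.ge⟩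
  simp only [mu_append, mu_cons_true] at h0
  obtain ⟨m, v, rfl, hm, hv⟩ := exists_last_descent (w := r) (c := 0) le_rfl (by omega)
  refine ⟨u, m, v, ⟨by omega, fun r hr => ⟨(hb r (hr.trans (by simp))).1, ?_⟩⟩,
    ⟨?_, fun t ht => ⟨?_, hv t ht⟩⟩, rfl⟩
  · have := hur r hr
    omega
  · simp at h0
    omega
  · have := (hb (u ++ true :: (m ++ false :: t)) (by simpa using ht)).1
    simp at this
    omega

lemma mem_Wp_succ_cases {w : List Bool} (h : w ∈ Wp (k + 1)) :
    (∃ u m v, u ∈ Wp k ∧ v ∈ Wp k ∧ w = u ++ true :: (m ++ true :: v)) ∨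
      ∃ i ≤ k, ∃ u v, u ∈ W i ∧ v ∈ Wp k ∧ w = u ++ true :: v := by
  obtain ⟨hk, hb⟩ := h
  push_cast at hk hb
  obtain ⟨p, v, rfl, hp, hv⟩ := exists_last_ascent (w := w) (c := 0) le_rfl (by omega)
  have hvWp : v ∈ Wp k := by
    refine ⟨by simp at hk; omega, fun t ht => ⟨hv t ht, ?_⟩⟩
    have := (hb (p ++ true :: t) (by simpa using ht)).2
    simp at this
    omega
  have hpb : ∀ r, r <+: p → 0 ≤ mu r ∧ mu r ≤ k + 1 := fun r hr =>
    hb r (hr.trans (by simp))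
  by_cases hhit : ∃ r, r <+: p ∧ (k : ℤ) + 1 ≤ mu r
  · obtain ⟨u, m, rfl, hu, hur⟩ := exists_first_hit (by omega) hhit
    refine Or.inl ⟨u, m, v, ⟨by omega, fun r hr => ⟨(hpb r (hr.trans (by simp))).1, ?_⟩⟩,
      hvWp, by simp⟩
    have := hur r hr
    omega
  · push Not at hhit
    obtain ⟨i, hi, hpi⟩ := exists_mem_W_of_prefix_bounds (k := k) hp
      fun r hr => ⟨(hpb r hr).1, by have := hhit r hr; omega⟩
    exact Or.inr ⟨i, hi, p, v, hpi, hvWp, rfl⟩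

lemma mem_W_succ_of_decomp {u m v : List Bool} (hu : u ∈ Wp k) (hv : v ∈ Wm k)
    (hw : u ++ true :: (m ++ false :: v) ∉ forbidden k) :
    u ++ true :: (m ++ false :: v) ∈ W (k + 1) := by
  have hb := prefix_bounds_of_mem_Wp_of_not_mem_forbidden hu hw
  have h₁ := hb (u ++ true :: m) (by simp)
  have h₂ := hb _ (List.prefix_refl _)
  simp only [mu_append, mu_cons_true, mu_cons_false, hv.1] at h₁ h₂
  refine ⟨?_, by exact_mod_cast hb, u ++ [true], by simp, by simp [hu.1]⟩
  simp only [mu_append, mu_cons_true, mu_cons_false, hv.1]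
  omega

lemma mem_Wp_succ_of_decomp {u m v : List Bool} (hu : u ∈ Wp k) (hv : v ∈ Wp k)
    (hw : u ++ true :: (m ++ true :: v) ∉ forbidden k) :
    u ++ true :: (m ++ true :: v) ∈ Wp (k + 1) := by
  have hb := prefix_bounds_of_mem_Wp_of_not_mem_forbidden hu hw
  have h₁ := hb (u ++ true :: m) (by simp)
  have h₂ := hb _ (List.prefix_refl _)
  simp only [mu_append, mu_cons_true, hv.1] at h₁ h₂
  refine ⟨?_, by exact_mod_cast hb⟩
  simp only [mu_append, mu_cons_true, hv.1]
  push_cast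
  omega

lemma mem_Wp_succ_of_mem_W {i : ℕ} (hi : i ≤ k) {u v : List Bool} (hu : u ∈ W i)
    (hv : v ∈ Wp k) : u ++ true :: v ∈ Wp (k + 1) := by
  obtain ⟨hu0, hub, -⟩ := hu
  refine ⟨by simp [hu0, hv.1]; ring, fun r hr => ?_⟩
  rcases prefix_append_cases hr with hr | ⟨t, ht, rfl⟩
  · have := hub r hr
    push_cast
    omega
  · rcases List.prefix_cons_iff.1 ht with rfl | ⟨s, rfl, hs⟩
    · simp [hu0]
      omega
    · have := hv.2 s hs
      simp [hu0]
      omega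

end Decomposition

lemma W_succ_eq (k : ℕ) : W (k + 1) = (Wp k * la * ⊤ * lb * Wm k) \ forbidden k := by
  ext w
  change w ∈ W (k + 1) ↔ w ∈ Wp k * {[true]} * ⊤ * {[false]} * Wm k ∧ w ∉ forbidden k
  rw [mem_mul_singleton_mul_singleton_mul]
  constructor
  · intro h
    obtain ⟨u, m, v, hu, hv, rfl⟩ := exists_decomp_of_mem_W_succ h
    exact ⟨⟨u, hu, m, trivial, v, hv, rfl⟩,
      not_mem_forbidden_of_prefix_bounds (by exact_mod_cast h.2.1)⟩
  · rintro ⟨⟨u, hu, m, -, v, hv, rfl⟩, hw⟩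
    exact mem_W_succ_of_decomp hu hv hw

lemma Wp_succ_eq (k : ℕ) :
    Wp (k + 1) = ((Wp k * la * ⊤ * la * Wp k) ⊔ ⨆ i : Fin (k + 1), W i.1 * la * Wp k) \
      forbidden k := by
  ext w
  change w ∈ Wp (k + 1) ↔ (w ∈ Wp k * {[true]} * ⊤ * {[true]} * Wp k ∨
    w ∈ ⨆ i : Fin (k + 1), W i.1 * {[true]} * Wp k) ∧ w ∉ forbidden k
  rw [mem_mul_singleton_mul_singleton_mul, Language.mem_iSup]
  simp only [mem_mul_singleton_mul]
  constructor
  · intro h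
    refine ⟨?_, not_mem_forbidden_of_prefix_bounds (by exact_mod_cast h.2)⟩
    rcases mem_Wp_succ_cases h with ⟨u, m, v, hu, hv, rfl⟩ | ⟨i, hi, u, v, hu, hv, rfl⟩
    · exact Or.inl ⟨u, hu, m, trivial, v, hv, rfl⟩
    · exact Or.inr ⟨⟨i, by omega⟩, u, hu, v, hv, rfl⟩
  · rintro ⟨⟨u, hu, m, -, v, hv, rfl⟩ | ⟨i, u, hu, v, hv, rfl⟩, hw⟩
    · exact mem_Wp_succ_of_decomp hu hv hw
    · exact mem_Wp_succ_of_mem_W (Nat.lt_succ_iff.1 i.2) hu hv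

lemma eq_nil_of_forall_prefix_mu_eq_zero {w : List Bool} (h : ∀ r, r <+: w → mu r = 0) :
    w = [] := by
  cases w with
  | nil => rfl
  | cons x w =>
    have := h [x] (by simp)
    cases x <;> simp at this

lemma W_zero : W 0 = 1 := by
  ext w
  rw [Language.mem_one]
  constructor
  · rintro ⟨-, hb, -⟩
    exact eq_nil_of_forall_prefix_mu_eq_zero fun r hr =>
      le_antisymm (by exact_mod_cast (hb r hr).2) (hb r hr).1
  · rintro rfl
    exact ⟨mu_nil, fun r hr => by simp [List.prefix_nil.1 hr], [], List.nil_prefix, mu_nil⟩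

lemma Wp_zero : Wp 0 = 1 := by
  ext w
  rw [Language.mem_one]
  constructor
  · rintro ⟨-, hb⟩
    exact eq_nil_of_forall_prefix_mu_eq_zero fun r hr =>
      le_antisymm (by exact_mod_cast (hb r hr).2) (hb r hr).1
  · rintro rfl
    exact ⟨mu_nil, fun r hr => by simp [List.prefix_nil.1 hr]⟩

lemma Wm_zero : Wm 0 = 1 := by
  ext w
  rw [Language.mem_one]
  constructor
  · rintro ⟨-, hb⟩
    exact eq_nil_of_forall_prefix_mu_eq_zero fun r hr =>
      le_antisymm (hb r hr).2 (by simpa using (hb r hr).1)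
  · rintro rfl
    exact ⟨by simp, fun r hr => by simp [List.prefix_nil.1 hr]⟩

/-- The prefix-counting and the recursive definitions of the witness languages agree:
`W_k = W′_k`, `W_k⁺ = W′_k⁺` and `W_k⁻ = W′_k⁻` for every `k`. -/
theorem witness_languages_recursive_characterisation (k : ℕ) :
    W k = W' k ∧ Wp k = W'p k ∧ Wm k = W'm k := by
  induction k using Nat.strong_induction_on with
  | _ k ih =>
    cases k with
    | zero =>
      rw [W', W'p, W'm]
      exact ⟨W_zero, Wp_zero, Wm_zero⟩
    | succ k =>
      obtain ⟨-, hp, hm⟩ := ih k (Nat.lt_succ_self k)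
      have hW : ∀ i : Fin (k + 1), W i = W' i := fun i => (ih i i.2).1
      have hWp : Wp (k + 1) = W'p (k + 1) := by
        rw [Wp_succ_eq, W'p, forbidden, hp, hm]
        simp only [hW]
      refine ⟨by rw [W_succ_eq, W', forbidden, hp, hm], hWp, ?_⟩
      rw [W'm, ← hWp, Wm_eq_swapL]

end ADTpaper
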